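/- arXiv:1909.06475 — 2 statements merged into one kernel-verified Lean document; each statement's English description precedes it below -/
import Mathlib

section
/- The Mendelsohn triple system of order 7 with triples {(0,1,2),(0,3,1),(0,2,4),(0,5,3),(0,4,6),(0,6,5),(1,5,2),(1,3,6),(1,4,5),(1,6,4),(2,3,4),(2,6,3),(2,5,6),(3,5,4)} has no 4-good sequencing. -/
/-- The underlying 3-element block of a cyclic triple. -/
def mtsBlock {v : ℕ} (t : Fin v × Fin v × Fin v) : Finset (Fin v) :=
  {t.1, t.2.1, t.2.2}

/-- The multiset of ordered pairs contained in the cyclic triple `(x,y,z)`,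
namely `(x,y)`, `(y,z)`, `(z,x)`. -/
def mtsPairs {v : ℕ} (t : Fin v × Fin v × Fin v) : Multiset (Fin v × Fin v) :=
  {(t.1, t.2.1), (t.2.1, t.2.2), (t.2.2, t.1)}

/-- `T` is a Mendelsohn triple system of order `v`: a collection of cyclic
triples of distinct points such that every ordered pair of distinct points
occurs in exactly one triple. -/
def IsMTS {v : ℕ} (T : Multiset (Fin v × Fin v × Fin v)) : Prop :=
  (∀ t ∈ T, t.1 ≠ t.2.1 ∧ t.2.1 ≠ t.2.2 ∧ t.2.2 ≠ t.1) ∧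
  ∀ x y : Fin v, x ≠ y → Multiset.count (x, y) (T.bind mtsPairs) = 1

/-- `xs` is an `ℓ`-good sequencing of the collection `T` of cyclic triples:
`xs` is a permutation of the point set, and for every triple `(x,y,z)` of `T`
(with positions `i`, `j`, `k` in `xs`) it is not the case that `i < j < k` with
`k - i + 1 ≤ ℓ`, nor `j < k < i` with `i - j + 1 ≤ ℓ`, nor `k < i < j` with
`j - k + 1 ≤ ℓ`. -/
def IsGoodSeq {v : ℕ} (ℓ : ℕ) (T : Multiset (Fin v × Fin v × Fin v))
    (xs : List (Fin v)) : Prop :=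
  xs.Perm (List.finRange v) ∧
  ∀ t ∈ T,
    ¬(xs.idxOf t.1 < xs.idxOf t.2.1 ∧ xs.idxOf t.2.1 < xs.idxOf t.2.2 ∧
        xs.idxOf t.2.2 - xs.idxOf t.1 + 1 ≤ ℓ) ∧
    ¬(xs.idxOf t.2.1 < xs.idxOf t.2.2 ∧ xs.idxOf t.2.2 < xs.idxOf t.1 ∧
        xs.idxOf t.1 - xs.idxOf t.2.1 + 1 ≤ ℓ) ∧
    ¬(xs.idxOf t.2.2 < xs.idxOf t.1 ∧ xs.idxOf t.1 < xs.idxOf t.2.1 ∧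
        xs.idxOf t.2.1 - xs.idxOf t.2.2 + 1 ≤ ℓ)

/-- `B` is a twofold triple system of order `v`: a multiset of 3-element
blocks such that every 2-element subset of points lies in exactly two blocks,
counted with multiplicity. -/
def IsTTS {v : ℕ} (B : Multiset (Finset (Fin v))) : Prop :=
  (∀ b ∈ B, b.card = 3) ∧
  ∀ x y : Fin v, x ≠ y → B.countP (fun b => x ∈ b ∧ y ∈ b) = 2

/-!
Relabelling the points by an automorphism of the design (a permutation carrying the cyclic
triples onto the cyclic triples, up to rotation) turns an `ℓ`-good sequencing into another one.
This design is invariant under the 7-cycle `(0 1 4 2 5 3 6)` and the 6-cycle `(1 2 4 6 5 3)`,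
which generate a 2-transitive group of automorphisms, so a 4-good sequencing could be taken to
begin with `0, 1`. For each of the 120 orders of the remaining points `2, …, 6`, some triple
of the design appears in its cyclic order within four consecutive positions.
-/

open Equiv

section GoodSeq

variable {v ℓ : ℕ} {T : Multiset (Fin v × Fin v × Fin v)} {xs : List (Fin v)}

def AscendsInWindow (ℓ : ℕ) (xs : List (Fin v)) (a b c : Fin v) : Prop :=
  xs.idxOf a < xs.idxOf b ∧ xs.idxOf b < xs.idxOf c ∧ xs.idxOf c - xs.idxOf a + 1 ≤ ℓ

instance (ℓ : ℕ) (xs : List (Fin v)) (a b c : Fin v) :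
    Decidable (AscendsInWindow ℓ xs a b c) :=
  inferInstanceAs (Decidable (_ ∧ _ ∧ _))

def OccursInWindow (ℓ : ℕ) (xs : List (Fin v)) (t : Fin v × Fin v × Fin v) : Prop :=
  AscendsInWindow ℓ xs t.1 t.2.1 t.2.2 ∨ AscendsInWindow ℓ xs t.2.1 t.2.2 t.1 ∨
    AscendsInWindow ℓ xs t.2.2 t.1 t.2.1

instance (ℓ : ℕ) (xs : List (Fin v)) (t : Fin v × Fin v × Fin v) :
    Decidable (OccursInWindow ℓ xs t) :=
  inferInstanceAs (Decidable (_ ∨ _ ∨ _))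

theorem isGoodSeq_iff :
    IsGoodSeq ℓ T xs ↔ xs.Perm (List.finRange v) ∧ ∀ t ∈ T, ¬ OccursInWindow ℓ xs t := by
  simp only [IsGoodSeq, OccursInWindow, AscendsInWindow, not_or]

def tripleRotate (t : Fin v × Fin v × Fin v) : Fin v × Fin v × Fin v := (t.2.1, t.2.2, t.1)

def tripleRotations (t : Fin v × Fin v × Fin v) : List (Fin v × Fin v × Fin v) :=
  [t, tripleRotate t, tripleRotate (tripleRotate t)]

def tripleMap (σ : Perm (Fin v)) (t : Fin v × Fin v × Fin v) : Fin v × Fin v × Fin v :=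
  (σ t.1, σ t.2.1, σ t.2.2)

theorem tripleRotations_tripleMap (σ : Perm (Fin v)) (t : Fin v × Fin v × Fin v) :
    tripleRotations (tripleMap σ t) = (tripleRotations t).map (tripleMap σ) := rfl

theorem mem_tripleRotations_trans {t u w : Fin v × Fin v × Fin v}
    (htu : t ∈ tripleRotations u) (huw : u ∈ tripleRotations w) : t ∈ tripleRotations w := by
  simp only [tripleRotations, List.mem_cons, List.not_mem_nil, or_false] at htu huw ⊢
  rcases huw with rfl | rfl | rfl <;> rcases htu with rfl | rfl | rfl <;> simp [tripleRotate]

theorem occursInWindow_tripleRotate {t : Fin v × Fin v × Fin v} :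
    OccursInWindow ℓ xs (tripleRotate t) ↔ OccursInWindow ℓ xs t := by
  simp only [OccursInWindow, tripleRotate]
  tauto

theorem occursInWindow_of_mem_tripleRotations {t u : Fin v × Fin v × Fin v}
    (h : u ∈ tripleRotations t) : OccursInWindow ℓ xs u ↔ OccursInWindow ℓ xs t := by
  simp only [tripleRotations, List.mem_cons, List.not_mem_nil, or_false] at h
  rcases h with rfl | rfl | rfl <;> simp only [occursInWindow_tripleRotate]

theorem List.idxOf_map_of_injective {α β : Type*} [BEq α] [LawfulBEq α] [BEq β] [LawfulBEq β]
    {f : α → β} (hf : Function.Injective f) (xs : List α) (a : α) :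
    (xs.map f).idxOf (f a) = xs.idxOf a := by
  induction xs with
  | nil => rfl
  | cons b xs ih =>
    by_cases hb : b = a
    · simp [hb]
    · simp [List.idxOf_cons_ne _ hb, List.idxOf_cons_ne _ (hf.ne hb), ih]

theorem occursInWindow_map (σ : Perm (Fin v)) (t : Fin v × Fin v × Fin v) :
    OccursInWindow ℓ (xs.map σ) (tripleMap σ t) ↔ OccursInWindow ℓ xs t := by
  simp only [OccursInWindow, AscendsInWindow, tripleMap,
    List.idxOf_map_of_injective σ.injective]

def tripleAut (T : Multiset (Fin v × Fin v × Fin v)) : Submonoid (Perm (Fin v)) where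
  carrier := {σ | ∀ t ∈ T, ∃ s ∈ T, t ∈ tripleRotations (tripleMap σ s)}
  one_mem' t ht := ⟨t, ht, by simp [tripleRotations, tripleMap]⟩
  mul_mem' {σ τ} hσ hτ t ht := by
    obtain ⟨s, hs, hts⟩ := hσ t ht
    obtain ⟨r, hr, hsr⟩ := hτ s hs
    refine ⟨r, hr, mem_tripleRotations_trans hts ?_⟩
    rw [tripleRotations_tripleMap] at hsr ⊢
    exact List.mem_map_of_mem hsr

theorem mem_tripleAut_iff {σ : Perm (Fin v)} :
    σ ∈ tripleAut T ↔ ∀ t ∈ T, ∃ s ∈ T, t ∈ tripleRotations (tripleMap σ s) := Iff.rfl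

theorem IsGoodSeq.map {σ : Perm (Fin v)} (hσ : σ ∈ tripleAut T) (h : IsGoodSeq ℓ T xs) :
    IsGoodSeq ℓ T (xs.map σ) := by
  rw [isGoodSeq_iff] at h ⊢
  refine ⟨(h.1.map σ).trans σ.map_finRange_perm, fun t ht hocc => ?_⟩
  obtain ⟨s, hs, hts⟩ := hσ t ht
  rw [occursInWindow_of_mem_tripleRotations hts, occursInWindow_map] at hocc
  exact h.2 s hs hocc

end GoodSeq

def mts7 : Multiset (Fin 7 × Fin 7 × Fin 7) :=
  {(0,1,2),(0,3,1),(0,2,4),(0,5,3),(0,4,6),(0,6,5),(1,5,2),(1,3,6),(1,4,5),(1,6,4),(2,3,4),(2,6,3),(2,5,6),(3,5,4)}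

set_option maxRecDepth 10000 in
theorem mts7_exists_aut_apply_eq_zero_one {a b : Fin 7} (hab : a ≠ b) :
    ∃ σ ∈ tripleAut mts7, σ a = 0 ∧ σ b = 1 := by
  obtain ⟨i, -, j, -, hσ⟩ : ∃ i < 7, ∃ j < 6,
      (c[1,2,4,6,5,3] ^ j * c[0,1,4,2,5,3,6] ^ i : Perm (Fin 7)) a = 0 ∧
      (c[1,2,4,6,5,3] ^ j * c[0,1,4,2,5,3,6] ^ i : Perm (Fin 7)) b = 1 := by
    revert a b
    decide
  refine ⟨_, mul_mem (pow_mem ?_ j) (pow_mem ?_ i), hσ⟩ <;> rw [mem_tripleAut_iff] <;> decide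

set_option maxRecDepth 10000 in
theorem mts7_not_isGoodSeq_zero_one (rest : List (Fin 7)) :
    ¬ IsGoodSeq 4 mts7 (0 :: 1 :: rest) := by
  rw [isGoodSeq_iff]
  rintro ⟨hperm, hgood⟩
  have hrest : rest ∈ ([2, 3, 4, 5, 6] : List (Fin 7)).permutations' :=
    List.mem_permutations'.2 hperm.cons_inv.cons_inv
  have hcover : ∀ rest ∈ ([2, 3, 4, 5, 6] : List (Fin 7)).permutations',
      ∃ t ∈ mts7, OccursInWindow 4 (0 :: 1 :: rest) t := by
    decide
  obtain ⟨t, ht, hocc⟩ := hcover rest hrest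
  exact hgood t ht hocc

theorem mts7_no_four_good_seq :
    ¬ ∃ xs : List (Fin 7),
      IsGoodSeq 4 ({(0,1,2),(0,3,1),(0,2,4),(0,5,3),(0,4,6),(0,6,5),(1,5,2),(1,3,6),(1,4,5),(1,6,4),(2,3,4),(2,6,3),(2,5,6),(3,5,4)} : Multiset (Fin 7 × Fin 7 × Fin 7)) xs := by
  rintro ⟨xs, hxs⟩
  change IsGoodSeq 4 mts7 xs at hxs
  obtain ⟨a, b, rest, rfl⟩ : ∃ a b rest, xs = a :: b :: rest := by
    match xs, hxs.1.length_eq with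
    | a :: b :: rest, _ => exact ⟨a, b, rest, rfl⟩
  have hab : a ≠ b := by
    have hnodup := hxs.1.nodup_iff.2 (List.nodup_finRange 7)
    rintro rfl
    simp at hnodup
  obtain ⟨σ, hσ, ha, hb⟩ := mts7_exists_aut_apply_eq_zero_one hab
  have hgood := hxs.map hσ
  rw [List.map_cons, List.map_cons, ha, hb] at hgood
  exact mts7_not_isGoodSeq_zero_one _ hgood
end

section
/- If a Mendelsohn triple system of order 7 has an ℓ-good sequencing, then ℓ ≤ 3. -/
/-!
Give an ordered pair of positions `(i, j)` of the sequencing the weight `2` if `i < j`, `-1` if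
`j < i < j + ℓ` and `-4` if `j + ℓ ≤ i`. An `ℓ`-good cyclic triple has total weight at most `0`:
if its positions increase cyclically, its one descent spans at least `ℓ`, giving `2 + 2 - 4`;
otherwise it has one ascent and two descents. As every ordered pair of distinct points lies in
exactly one triple, the weights of the triples add up to the weight of all ordered pairs of
distinct positions, which for `v = 7` and `ℓ = 4` is `42 - 15 - 24 = 3 > 0`. (The weights encode a
count: seven of the fourteen triples increase cyclically, but only six pairs of positions are at
distance at least `4`.)
-/

open Finset

def pairWeight (ℓ i j : ℕ) : ℤ :=
  if i < j then 2 else if i < j + ℓ then -1 else -4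

theorem pairWeight_cycle_nonpos {ℓ i j k : ℕ}
    (h₁ : ¬(i < j ∧ j < k ∧ k - i + 1 ≤ ℓ)) (h₂ : ¬(j < k ∧ k < i ∧ i - j + 1 ≤ ℓ))
    (h₃ : ¬(k < i ∧ i < j ∧ j - k + 1 ≤ ℓ)) :
    pairWeight ℓ i j + pairWeight ℓ j k + pairWeight ℓ k i ≤ 0 := by
  unfold pairWeight
  split_ifs <;> omega

theorem IsMTS.bind_mtsPairs {v : ℕ} {T : Multiset (Fin v × Fin v × Fin v)} (hT : IsMTS T) :
    T.bind mtsPairs = (univ : Finset (Fin v)).offDiag.val := by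
  ext ⟨x, y⟩
  rw [Multiset.count_eq_of_nodup univ.offDiag.nodup]
  by_cases hxy : x = y
  · subst hxy
    rw [if_neg (by simp), Multiset.count_eq_zero, Multiset.mem_bind]
    rintro ⟨t, ht, hx⟩
    obtain ⟨h₁₂, h₂₃, h₃₁⟩ := hT.1 t ht
    simp only [mtsPairs, Multiset.insert_eq_cons, Multiset.mem_cons, Multiset.mem_singleton,
      Prod.mk.injEq] at hx
    rcases hx with ⟨h, h'⟩ | ⟨h, h'⟩ | ⟨h, h'⟩
    exacts [h₁₂ (h.symm.trans h'), h₂₃ (h.symm.trans h'), h₃₁ (h.symm.trans h')]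
  · rw [if_pos (by simp [hxy]), hT.2 x y hxy]

theorem IsMTS.sum_map_mtsPairs {v : ℕ} {M : Type*} [AddCommMonoid M]
    {T : Multiset (Fin v × Fin v × Fin v)} (hT : IsMTS T) (g : Fin v × Fin v → M) :
    (T.map fun t => ((mtsPairs t).map g).sum).sum = ∑ p ∈ (univ : Finset (Fin v)).offDiag, g p := by
  rw [← Multiset.sum_bind, ← Multiset.map_bind, hT.bind_mtsPairs]
  rfl

theorem List.Perm.exists_equiv_idxOf {v : ℕ} {xs : List (Fin v)} (h : xs.Perm (List.finRange v)) :
    ∃ e : Fin v ≃ Fin v, ∀ z, (e z : ℕ) = xs.idxOf z := by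
  have hmem : ∀ z, z ∈ xs := fun z => h.mem_iff.2 (List.mem_finRange z)
  have hlen : xs.length = v := by simpa using h.length_eq
  let f (z : Fin v) : Fin v := ⟨xs.idxOf z, (List.idxOf_lt_length_of_mem (hmem z)).trans_eq hlen⟩
  have hf : Function.Injective f := fun a b hab =>
    (List.idxOf_inj (hmem a)).1 (congrArg Fin.val hab)
  exact ⟨Equiv.ofBijective f (Finite.injective_iff_bijective.1 hf), fun _ => rfl⟩

theorem IsGoodSeq.mono {v ℓ ℓ' : ℕ} {T : Multiset (Fin v × Fin v × Fin v)} {xs : List (Fin v)}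
    (hxs : IsGoodSeq ℓ T xs) (h : ℓ' ≤ ℓ) : IsGoodSeq ℓ' T xs :=
  ⟨hxs.1, fun t ht => by have := hxs.2 t ht; omega⟩

theorem IsGoodSeq.sum_pairWeight_nonpos {v ℓ : ℕ} {T : Multiset (Fin v × Fin v × Fin v)}
    {xs : List (Fin v)} (hT : IsMTS T) (hxs : IsGoodSeq ℓ T xs) :
    ∑ p ∈ (univ : Finset (Fin v)).offDiag, pairWeight ℓ p.1 p.2 ≤ 0 := by
  obtain ⟨e, he⟩ := hxs.1.exists_equiv_idxOf
  let g (p : Fin v × Fin v) : ℤ := pairWeight ℓ (xs.idxOf p.1) (xs.idxOf p.2)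
  calc ∑ p ∈ (univ : Finset (Fin v)).offDiag, pairWeight ℓ p.1 p.2
      = ∑ p ∈ (univ : Finset (Fin v)).offDiag, g p :=
        (Finset.sum_equiv (e.prodCongr e) (by simp [e.injective.eq_iff]) (by simp [g, he])).symm
    _ = (T.map fun t => ((mtsPairs t).map g).sum).sum := (hT.sum_map_mtsPairs g).symm
    _ ≤ (T.map fun _ => (0 : ℤ)).sum := Multiset.sum_map_le_sum_map _ _ fun t ht => by
        have := pairWeight_cycle_nonpos (hxs.2 t ht).1 (hxs.2 t ht).2.1 (hxs.2 t ht).2.2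
        simpa [mtsPairs, g, add_assoc] using this
    _ = 0 := by simp

theorem mts7_good_seq_bound (ℓ : ℕ) (T : Multiset (Fin 7 × Fin 7 × Fin 7))
    (hT : IsMTS T) (xs : List (Fin 7)) (hxs : IsGoodSeq ℓ T xs) :
    ℓ ≤ 3 := by
  by_contra! hℓ
  have hsum := (hxs.mono (show 4 ≤ ℓ by omega)).sum_pairWeight_nonpos hT
  have : ∑ p ∈ (univ : Finset (Fin 7)).offDiag, pairWeight 4 p.1 p.2 = 3 := by decide
  omega
end
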